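/- Let A, B be bounded selfadjoint operators on a complex Hilbert space H with B indefinite, and assume I_≥(A,B) = [λ₋, λ₊] with λ₋ < λ₊. Then M₊ = {x ∈ H : ⟨Bx,x⟩ > 0 and ⟨Ax,x⟩/⟨Bx,x⟩ = −λ₋} and M₋ = {x ∈ H : ⟨Bx,x⟩ < 0 and ⟨Ax,x⟩/⟨Bx,x⟩ = −λ₊}. -/

import Mathlib

open scoped InnerProductSpace

noncomputable section

variable {H : Type*} [NormedAddCommGroup H] [InnerProductSpace ℂ H] [CompleteSpace H]

/-- The (real) quadratic form associated to an operator. -/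
def qf (T : H →L[ℂ] H) (x : H) : ℝ := (⟪T x, x⟫_ℂ).re

/-- Positive semidefinite operator. -/
def PosSemidef (T : H →L[ℂ] H) : Prop := ∀ x, 0 ≤ qf T x

/-- Positive definite operator (uniformly positive). -/
def PosDef (T : H →L[ℂ] H) : Prop := ∃ α > 0, ∀ x, α * ‖x‖ ^ 2 ≤ qf T x

/-- The set of parameters where the pencil `A + ρ B` is positive semidefinite. -/
def Ige (A B : H →L[ℂ] H) : Set ℝ := {ρ | PosSemidef (A + (ρ : ℂ) • B)}

/-- The set of parameters where the pencil `A + ρ B` is positive definite. -/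
def Igt (A B : H →L[ℂ] H) : Set ℝ := {ρ | PosDef (A + (ρ : ℂ) • B)}

/-- An operator is indefinite if its quadratic form takes both signs. -/
def Indefinite (T : H →L[ℂ] H) : Prop := (∃ x, 0 < qf T x) ∧ (∃ x, qf T x < 0)

/-!
If `⟪A x, x⟫ = -μ ⟪B x, x⟫` and `ρ ∈ I_≥(A, B)`, then `0 ≤ ⟪(A + ρ B) x, x⟫ = (ρ - μ) ⟪B x, x⟫`.
So `⟪B x, x⟫ > 0` on `M₊` (take `μ = λ₋ < ρ = λ₊`) and `⟪B x, x⟫ < 0` on `M₋` (take `μ = λ₊ > ρ = λ₋`).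
-/

section

variable {E : Type*} [NormedAddCommGroup E] [InnerProductSpace ℂ E]

lemma qf_add_ofReal_smul (A B : E →L[ℂ] E) (ρ : ℝ) (x : E) :
    qf (A + (ρ : ℂ) • B) x = qf A x + ρ * qf B x := by
  rw [qf, add_apply, smul_apply, inner_add_left, Complex.add_re, inner_smul_left,
    Complex.conj_ofReal, Complex.re_ofReal_mul, qf, qf]

lemma sub_mul_qf_nonneg_of_mem_Ige {A B : E →L[ℂ] E} {ρ μ : ℝ} (hρ : ρ ∈ Ige A B) {x : E}
    (hne : qf B x ≠ 0) (hμ : qf A x / qf B x = -μ) : 0 ≤ (ρ - μ) * qf B x := by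
  have hA : qf A x = -μ * qf B x := (div_eq_iff hne).mp hμ
  have := hρ x
  rw [qf_add_ofReal_smul, hA] at this
  linarith

lemma qf_pos_of_div_eq_neg {A B : E →L[ℂ] E} {ρ μ : ℝ} (hρ : ρ ∈ Ige A B) (hμρ : μ < ρ)
    {x : E} (hne : qf B x ≠ 0) (hμ : qf A x / qf B x = -μ) : 0 < qf B x :=
  lt_of_le_of_ne
    (nonneg_of_mul_nonneg_right (sub_mul_qf_nonneg_of_mem_Ige hρ hne hμ) (sub_pos.mpr hμρ))
    hne.symm

lemma qf_neg_of_div_eq_neg {A B : E →L[ℂ] E} {ρ μ : ℝ} (hρ : ρ ∈ Ige A B) (hρμ : ρ < μ)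
    {x : E} (hne : qf B x ≠ 0) (hμ : qf A x / qf B x = -μ) : qf B x < 0 :=
  lt_of_le_of_ne
    (nonpos_of_mul_nonneg_right (sub_mul_qf_nonneg_of_mem_Ige hρ hne hμ) (sub_neg.mpr hρμ))
    hne

end

theorem stmt15_general (A B : H →L[ℂ] H)
    (lm lp : ℝ) (hlt : lm < lp) (hI : Ige A B = Set.Icc lm lp) :
    {x : H | qf B x ≠ 0 ∧ qf A x / qf B x = -lm}
        = {x : H | 0 < qf B x ∧ qf A x / qf B x = -lm} ∧
    {x : H | qf B x ≠ 0 ∧ qf A x / qf B x = -lp}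
        = {x : H | qf B x < 0 ∧ qf A x / qf B x = -lp} := by
  have hlm : lm ∈ Ige A B := hI ▸ Set.left_mem_Icc.mpr hlt.le
  have hlp : lp ∈ Ige A B := hI ▸ Set.right_mem_Icc.mpr hlt.le
  constructor <;> ext x
  · exact ⟨fun ⟨hne, h⟩ => ⟨qf_pos_of_div_eq_neg hlp hlt hne h, h⟩, fun ⟨hpos, h⟩ => ⟨hpos.ne', h⟩⟩
  · exact ⟨fun ⟨hne, h⟩ => ⟨qf_neg_of_div_eq_neg hlm hlt hne h, h⟩, fun ⟨hneg, h⟩ => ⟨hneg.ne, h⟩⟩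

theorem stmt15 (A B : H →L[ℂ] H) (hA : IsSelfAdjoint A) (hB : IsSelfAdjoint B)
    (hBind : Indefinite B)
    (lm lp : ℝ) (hlt : lm < lp) (hI : Ige A B = Set.Icc lm lp) :
    {x : H | qf B x ≠ 0 ∧ qf A x / qf B x = -lm}
        = {x : H | 0 < qf B x ∧ qf A x / qf B x = -lm} ∧
    {x : H | qf B x ≠ 0 ∧ qf A x / qf B x = -lp}
        = {x : H | qf B x < 0 ∧ qf A x / qf B x = -lp} :=
  stmt15_general A B lm lp hlt hI
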